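/- Let M be an infinite Hermitian positive definite matrix and let (v_n)_{n≥0} be the orthonormal basis obtained by Gram–Schmidt from the canonical unit vectors: each v_n is supported on {0,…,n}, has v_n(n) real and positive, and B_M(v_n, v_m) = 1 if n = m and 0 otherwise, where B_M(v,w) = Σ_{i,j} v_i · M(i,j) · conj(w_j). Then: if Σ_{n=0}^∞ |v_n(0)|² < ∞ then γ(M) = 1 / Σ_{n=0}^∞ |v_n(0)|², and if Σ_{n=0}^∞ |v_n(0)|² = ∞ then γ(M) = 0. -/

import Mathlib

/-!
Every finitely supported `w` supported below `N` is a combination `∑_{n<N} c_n v_n`, because the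
`v_n` are triangular with nonzero diagonal. Orthonormality gives `Q_M(w) = ∑ |c_n|²`, while
`w_0 = ∑ c_n v_n(0)`. So if `w_0 = 1`, Cauchy–Schwarz gives `1 ≤ Q_M(w) · S_N` with
`S_N = ∑_{n<N} |v_n(0)|²`, and equality holds for `c_n = conj(v_n(0)) / S_N`. Hence `γ(M)` is the
limit of `1 / S_N`, which is `1 / ∑ |v_n(0)|²` or `0`.
-/

open Finset

/-- The sesquilinear form associated with an infinite matrix `M`:
`B_M(v,w) = Σ_{i,j} v_i · M(i,j) · conj(w_j)` for finitely supported `v, w`. -/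
noncomputable def BM (M : ℕ → ℕ → ℂ) (v w : ℕ →₀ ℂ) : ℂ :=
  ∑ i ∈ v.support, ∑ j ∈ w.support, v i * M i j * (starRingEnd ℂ) (w j)

/-- The quadratic form `Q_M(v) = B_M(v,v)` (its real part; for Hermitian `M` it is real). -/
noncomputable def QM (M : ℕ → ℕ → ℂ) (v : ℕ →₀ ℂ) : ℝ :=
  (BM M v v).re

/-- `M` is an (infinite) Hermitian matrix. -/
def IsHermitianMatrix (M : ℕ → ℕ → ℂ) : Prop :=
  ∀ i j, M j i = (starRingEnd ℂ) (M i j)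

/-- `M` is positive definite: `Q_M(v) > 0` for every nonzero finitely supported `v`. -/
def IsPosDef (M : ℕ → ℕ → ℂ) : Prop :=
  ∀ v : ℕ →₀ ℂ, v ≠ 0 → 0 < QM M v

/-- `γ(M) = inf { Q_M(v) : v finitely supported, v₀ = 1 }`. -/
noncomputable def gammaIdx (M : ℕ → ℕ → ℂ) : ℝ :=
  sInf {x | ∃ v : ℕ →₀ ℂ, v 0 = 1 ∧ QM M v = x}

open Filter Topology

theorem csInf_eq_of_tendsto_of_eventually_mem {ι α : Type*} [ConditionallyCompleteLattice α]
    [TopologicalSpace α] [ClosedIicTopology α] [ClosedIciTopology α] {l : Filter ι} [l.NeBot]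
    {s : Set α} {u : ι → α} {a : α} (hmem : ∀ᶠ i in l, u i ∈ s)
    (hle : ∀ x ∈ s, ∀ᶠ i in l, u i ≤ x) (hu : Tendsto u l (𝓝 a)) : sInf s = a :=
  have ⟨i, hi⟩ := hmem.exists
  IsGLB.csInf_eq ⟨fun x hx => le_of_tendsto hu (hle x hx),
    fun _ hb => ge_of_tendsto hu (hmem.mono fun _ hi => hb hi)⟩ ⟨u i, hi⟩

section Sesquilinear

variable (M : ℕ → ℕ → ℂ)

theorem BM_eq_sum_of_support_subset {v w : ℕ →₀ ℂ} {s t : Finset ℕ}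
    (hs : v.support ⊆ s) (ht : w.support ⊆ t) :
    BM M v w = ∑ i ∈ s, ∑ j ∈ t, v i * M i j * starRingEnd ℂ (w j) := by
  refine (sum_subset hs fun i _ hi => ?_).trans (sum_congr rfl fun i _ => ?_)
  · simp [Finsupp.notMem_support_iff.mp hi]
  · exact sum_subset ht fun j _ hj => by simp [Finsupp.notMem_support_iff.mp hj]

theorem BM_add_left (v v' w : ℕ →₀ ℂ) : BM M (v + v') w = BM M v w + BM M v' w := by
  classical
  have hs := Finsupp.support_add (g₁ := v) (g₂ := v')
  rw [BM_eq_sum_of_support_subset M hs subset_rfl,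
    BM_eq_sum_of_support_subset M subset_union_left subset_rfl,
    BM_eq_sum_of_support_subset M subset_union_right subset_rfl, ← sum_add_distrib]
  simp only [Finsupp.add_apply, add_mul, sum_add_distrib]

theorem BM_smul_left (c : ℂ) (v w : ℕ →₀ ℂ) : BM M (c • v) w = c * BM M v w := by
  rw [BM_eq_sum_of_support_subset M Finsupp.support_smul subset_rfl, BM, mul_sum]
  simp only [Finsupp.smul_apply, smul_eq_mul, mul_sum, mul_assoc]

theorem BM_add_right (v w w' : ℕ →₀ ℂ) : BM M v (w + w') = BM M v w + BM M v w' := by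
  classical
  have ht := Finsupp.support_add (g₁ := w) (g₂ := w')
  rw [BM_eq_sum_of_support_subset M subset_rfl ht,
    BM_eq_sum_of_support_subset M subset_rfl (subset_union_left (s₂ := w'.support)),
    BM_eq_sum_of_support_subset M subset_rfl (subset_union_right (s₁ := w.support)),
    ← sum_add_distrib]
  simp only [Finsupp.add_apply, map_add, mul_add, sum_add_distrib]

theorem BM_smul_right (c : ℂ) (v w : ℕ →₀ ℂ) :
    BM M v (c • w) = starRingEnd ℂ c * BM M v w := by
  rw [BM_eq_sum_of_support_subset M subset_rfl Finsupp.support_smul, BM, mul_sum]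
  refine sum_congr rfl fun i _ => ?_
  simp only [Finsupp.smul_apply, smul_eq_mul, map_mul, mul_sum]
  exact sum_congr rfl fun j _ => by ring

noncomputable def BM.sesqForm : (ℕ →₀ ℂ) →ₗ[ℂ] (ℕ →₀ ℂ) →ₗ⋆[ℂ] ℂ :=
  LinearMap.mk₂'ₛₗ (RingHom.id ℂ) (starRingEnd ℂ) (BM M) (BM_add_left M) (BM_smul_left M)
    (BM_add_right M) (BM_smul_right M)

theorem BM.sesqForm_apply (v w : ℕ →₀ ℂ) : BM.sesqForm M v w = BM M v w := rfl

theorem QM_sum_smul_of_orthonormal {v : ℕ → ℕ →₀ ℂ}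
    (horth : ∀ n m, BM M (v n) (v m) = if n = m then 1 else 0) (c : ℕ → ℂ) (s : Finset ℕ) :
    QM M (∑ n ∈ s, c n • v n) = ∑ n ∈ s, ‖c n‖ ^ 2 := by
  have : BM M (∑ n ∈ s, c n • v n) (∑ n ∈ s, c n • v n) =
      ∑ n ∈ s, ((‖c n‖ ^ 2 : ℝ) : ℂ) := by
    rw [← BM.sesqForm_apply]
    simp only [map_sum, LinearMap.sum_apply, map_smul, map_smulₛₗ, LinearMap.smul_apply,
      BM.sesqForm_apply, horth]
    simp [Complex.conj_mul']
  rw [QM, this, ← Complex.ofReal_sum, Complex.ofReal_re]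

end Sesquilinear

theorem Finsupp.exists_eq_sum_smul_of_triangular {K : Type*} [Field K] {v : ℕ → ℕ →₀ K}
    (hsupp : ∀ n, (v n).support ⊆ Iic n) (hdiag : ∀ n, v n n ≠ 0) :
    ∀ (N : ℕ) (w : ℕ →₀ K), w.support ⊆ range N → ∃ c : ℕ → K, w = ∑ n ∈ range N, c n • v n
  | 0, w, hw => ⟨0, by simpa using hw⟩
  | N + 1, w, hw => by
    classical
    set a := w N / v N N
    have hrest : (w - a • v N).support ⊆ range N := by
      intro k hk
      have hkN : k ≤ N := by
        rcases mem_union.1 (Finsupp.support_sub hk) with hk' | hk'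
        · exact Nat.lt_succ_iff.1 (mem_range.1 (hw hk'))
        · exact mem_Iic.1 (hsupp N (Finsupp.support_smul hk'))
      refine mem_range.2 (lt_of_le_of_ne hkN ?_)
      rintro rfl
      exact Finsupp.mem_support_iff.1 hk (by simp [a, div_mul_cancel₀ _ (hdiag k)])
    obtain ⟨c, hc⟩ := exists_eq_sum_smul_of_triangular hsupp hdiag N _ hrest
    refine ⟨Function.update c N a, ?_⟩
    rw [sum_range_succ, Function.update_self,
      Finset.sum_congr rfl fun n hn => by rw [Function.update_of_ne (mem_range.1 hn).ne], ← hc]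
    abel

section GramSchmidt

variable {M : ℕ → ℕ → ℂ} {v : ℕ → ℕ →₀ ℂ}

theorem exists_apply_zero_eq_one_QM_eq_one_div
    (horth : ∀ n m, BM M (v n) (v m) = if n = m then 1 else 0) (N : ℕ)
    (hS : 0 < ∑ n ∈ range N, ‖v n 0‖ ^ 2) :
    ∃ w : ℕ →₀ ℂ, w 0 = 1 ∧ QM M w = 1 / ∑ n ∈ range N, ‖v n 0‖ ^ 2 := by
  set S := ∑ n ∈ range N, ‖v n 0‖ ^ 2
  refine ⟨∑ n ∈ range N, (starRingEnd ℂ (v n 0) / S) • v n, ?_, ?_⟩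
  · simp only [Finsupp.finsetSum_apply, Finsupp.smul_apply, smul_eq_mul, div_mul_eq_mul_div,
      Complex.conj_mul', ← sum_div]
    rw [div_eq_one_iff_eq (by exact_mod_cast hS.ne')]
    push_cast [S]
    rfl
  · rw [QM_sum_smul_of_orthonormal M horth]
    simp only [norm_div, Complex.norm_conj, Complex.norm_real, Real.norm_of_nonneg hS.le, div_pow,
      ← sum_div]
    field_simp
    rfl

theorem eventually_one_div_le_QM (hsupp : ∀ n, (v n).support ⊆ Iic n) (hdiag : ∀ n, v n n ≠ 0)
    (horth : ∀ n m, BM M (v n) (v m) = if n = m then 1 else 0) {w : ℕ →₀ ℂ} (hw : w 0 = 1) :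
    ∀ᶠ N in atTop, 1 / ∑ n ∈ range N, ‖v n 0‖ ^ 2 ≤ QM M w := by
  obtain ⟨N₀, hN₀⟩ := exists_nat_subset_range w.support
  filter_upwards [eventually_ge_atTop N₀] with N hN
  obtain ⟨c, rfl⟩ := Finsupp.exists_eq_sum_smul_of_triangular hsupp hdiag N w
    (hN₀.trans (range_subset_range.2 hN))
  have hcs : 1 ≤ ∑ n ∈ range N, ‖c n‖ * ‖v n 0‖ := calc
    1 = ‖∑ n ∈ range N, c n * v n 0‖ := by
      simpa [Finsupp.finsetSum_apply] using congrArg (‖·‖) hw.symm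
    _ ≤ ∑ n ∈ range N, ‖c n‖ * ‖v n 0‖ := norm_sum_le_of_le _ fun n _ => norm_mul_le _ _
  rw [QM_sum_smul_of_orthonormal M horth]
  refine div_le_of_le_mul₀ (by positivity) (by positivity) ?_
  calc 1 ≤ (∑ n ∈ range N, ‖c n‖ * ‖v n 0‖) ^ 2 := one_le_pow₀ hcs
    _ ≤ _ := sum_mul_sq_le_sq_mul_sq _ _ _

end GramSchmidt

theorem gamma_eq_inv_sum_sq_general (M : ℕ → ℕ → ℂ)
    (v : ℕ → (ℕ →₀ ℂ))
    (hsupp : ∀ n, (v n).support ⊆ Finset.Iic n)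
    (hlead : ∀ n, ((v n) n).im = 0 ∧ 0 < ((v n) n).re)
    (horth : ∀ n m, BM M (v n) (v m) = if n = m then 1 else 0) :
    (Summable (fun n => ‖(v n) 0‖ ^ 2) →
      gammaIdx M = 1 / ∑' n, ‖(v n) 0‖ ^ 2) ∧
    (¬ Summable (fun n => ‖(v n) 0‖ ^ 2) → gammaIdx M = 0) := by
  have hdiag : ∀ n, v n n ≠ 0 := fun n h => by simpa [h] using (hlead n).2
  have h0 : 0 < ‖v 0 0‖ ^ 2 := pow_pos (norm_pos_iff.2 (hdiag 0)) 2
  have hγ : ∀ L, Tendsto (fun N => 1 / ∑ n ∈ range N, ‖v n 0‖ ^ 2) atTop (𝓝 L) →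
      gammaIdx M = L := by
    refine fun L hL => csInf_eq_of_tendsto_of_eventually_mem ?_ ?_ hL
    · filter_upwards [eventually_ge_atTop 1] with N hN
      exact exists_apply_zero_eq_one_QM_eq_one_div horth N
        (h0.trans_le (single_le_sum (f := fun n => ‖v n 0‖ ^ 2) (fun n _ => sq_nonneg _)
          (mem_range.2 hN)))
    · rintro _ ⟨w, hw, rfl⟩
      exact eventually_one_div_le_QM hsupp hdiag horth hw
  refine ⟨fun hsum => hγ _ ?_, fun hsum => hγ _ ?_⟩
  · exact tendsto_const_nhds.div hsum.hasSum.tendsto_sum_nat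
      (hsum.tsum_pos (fun _ => sq_nonneg _) 0 h0).ne'
  · simpa only [one_div, Pi.inv_def] using ((not_summable_iff_tendsto_nat_atTop_of_nonneg
      fun _ => sq_nonneg _).1 hsum).inv_tendsto_atTop

/-- let `M` be Hermitian positive definite and `(v_n)` the Gram–Schmidt
orthonormal basis with respect to `B_M` (each `v_n` supported on `{0,…,n}` with positive
real leading entry `v_n(n)`).  If `Σ |v_n(0)|² < ∞` then `γ(M) = 1 / Σ |v_n(0)|²`, and
if `Σ |v_n(0)|² = ∞` then `γ(M) = 0`. -/
theorem gamma_eq_inv_sum_sq (M : ℕ → ℕ → ℂ)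
    (hHerm : IsHermitianMatrix M) (hPD : IsPosDef M)
    (v : ℕ → (ℕ →₀ ℂ))
    (hsupp : ∀ n, (v n).support ⊆ Finset.Iic n)
    (hlead : ∀ n, ((v n) n).im = 0 ∧ 0 < ((v n) n).re)
    (horth : ∀ n m, BM M (v n) (v m) = if n = m then 1 else 0) :
    (Summable (fun n => ‖(v n) 0‖ ^ 2) →
      gammaIdx M = 1 / ∑' n, ‖(v n) 0‖ ^ 2) ∧
    (¬ Summable (fun n => ‖(v n) 0‖ ^ 2) → gammaIdx M = 0) :=
  gamma_eq_inv_sum_sq_general M v hsupp hlead horth
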